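/- There exist absolute constants c₀ > 0 and C₀ > 0 such that the following holds. Let n, d be positive integers, β*, β ∈ ℝ^d, t > 0 with √t · ‖β*‖₂ ≥ C₀, and let Π be an n×n permutation matrix whose associated permutation has n_k(Π) cycles of length k, n₁(Π) fixed points, and fc(Π) := Σ_k n_k(Π) total cycles. Let X be an n×d random matrix with independent N(0,1) entries. Then E[ exp( −t ‖X β* − Π X β‖₂² ) ] ≤ (1 + 2t‖β − β*‖₂²)^{−n₁(Π)/2} · (c₀ √t ‖β*‖₂)^{−(n − fc(Π))} ≤ (1 + 2t‖β − β*‖₂²)^{−n₁(Π)/2} · (c₀ √t ‖β*‖₂)^{−(n − n₁(Π))/2}. -/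

import Mathlib

/-!
Write `xⱼ` for the rows of `X`. The integrand is `∏ⱼ exp (-t (⟨xⱼ, β*⟩ - ⟨x_{π j}, β⟩)²)`, a
product of factors each involving two rows. Dropping one factor (which is `≤ 1`) in every
nontrivial cycle of `π` turns each cycle into a path, so the rows can be integrated out one at a
time, each against a single remaining factor. By the Gaussian integral
`E exp (-a (⟨w, x⟩ + c)²) ≤ (1 + 2a‖w‖²)^{-1/2}`, a fixed point contributes
`(1 + 2t‖β - β*‖²)^{-1/2}` and each of the at least `n - fc(π)` remaining non-fixed points at most
`(1 + 2t‖β*‖²)^{-1/2} ≤ (√t ‖β*‖)⁻¹`; so `c₀ = C₀ = 1` work. The second inequality is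
`2 fc(π) ≤ n + n₁(π)`, as nontrivial cycles have length at least two.
-/

open MeasureTheory ProbabilityTheory Matrix

/-- The law of an `n × d` random matrix with i.i.d. standard Gaussian entries. -/
noncomputable def stdGaussianMatrix (n d : ℕ) : Measure (Fin n → Fin d → ℝ) :=
  Measure.pi fun _ => Measure.pi fun _ => gaussianReal 0 1

def sq2 {m : ℕ} (v : Fin m → ℝ) : ℝ := ∑ i, v i ^ 2

noncomputable def enorm2 {m : ℕ} (v : Fin m → ℝ) : ℝ := Real.sqrt (sq2 v)

def nFixed {n : ℕ} (π : Equiv.Perm (Fin n)) : ℕ :=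
  (Finset.univ.filter fun i => π i = i).card

/-- `cycleType` omits the fixed points, so they are added back. -/
def totCycles {n : ℕ} (π : Equiv.Perm (Fin n)) : ℕ :=
  nFixed π + Multiset.card π.cycleType

open Finset Function
open scoped ENNReal

namespace Equiv.Perm

variable {α : Type*} [Fintype α] [DecidableEq α]

lemma exists_mem_eq_or_inv_notMem (σ : Perm α) {T : Finset α} (hT : T.Nonempty)
    (hcyc : ∀ i ∈ T, σ i ≠ i → ∃ j ∉ T, σ.SameCycle i j) :
    ∃ i ∈ T, σ i = i ∨ σ⁻¹ i ∉ T := by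
  by_contra! h
  obtain ⟨i, hi⟩ := hT
  obtain ⟨j, hjT, hij⟩ := hcyc i hi (h i hi).1
  obtain ⟨m, rfl⟩ := (sameCycle_inv.mpr hij).exists_nat_pow_eq
  have hpow : ∀ m : ℕ, (σ⁻¹ ^ m) i ∈ T := by
    intro m
    induction m with
    | zero => simpa
    | succ m ih => rw [pow_succ', mul_apply]; exact (h _ ih).2
  exact hjT (hpow m)

lemma exists_subset_support_sameCycle (σ : Perm α) :
    ∃ R ⊆ σ.support, #R ≤ Multiset.card σ.cycleType ∧
      ∀ i ∈ σ.support, ∃ j ∈ R, σ.SameCycle i j := by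
  have hne : ∀ c ∈ σ.cycleFactorsFinset, c.support.Nonempty := fun c hc =>
    (mem_cycleFactorsFinset_iff.mp hc).1.nonempty_support
  refine ⟨σ.cycleFactorsFinset.attach.image fun c => (hne c.1 c.2).choose, ?_, ?_, ?_⟩
  · intro j hj
    obtain ⟨c, -, rfl⟩ := mem_image.mp hj
    exact mem_cycleFactorsFinset_support_le c.2 (hne c.1 c.2).choose_spec
  · exact card_image_le.trans (by simp [cycleType_def])
  · intro i hi
    have hc := cycleOf_mem_cycleFactorsFinset_iff.mpr hi
    exact ⟨_, mem_image_of_mem _ (mem_attach _ ⟨_, hc⟩),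
      (mem_support_cycleOf_iff.mp (hne _ hc).choose_spec).1⟩

lemma two_mul_card_cycleType_le_card_support (σ : Perm α) :
    2 * Multiset.card σ.cycleType ≤ #σ.support := by
  rw [← sum_cycleType, mul_comm, ← smul_eq_mul]
  exact Multiset.card_nsmul_le_sum fun _ => two_le_of_mem_cycleType

end Equiv.Perm

section RowElimination

variable {ι α : Type*} [DecidableEq ι] [MeasurableSpace α] {μ : ι → Measure α}

lemma lmarginal_mul_const (c : ℝ≥0∞) {g : (ι → α) → ℝ≥0∞} (hg : Measurable g) (s : Finset ι)
    (x : ι → α) :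
    (∫⋯∫⁻_s, (fun x => g x * c) ∂μ) x = (∫⋯∫⁻_s, g ∂μ) x * c :=
  lintegral_mul_const c (hg.comp measurable_updateFinset)

variable [Fintype ι] [∀ i, IsProbabilityMeasure (μ i)]

lemma lmarginal_prod_le_of_dependsOn (σ : Equiv.Perm ι) {f : ι → (ι → α) → ℝ≥0∞}
    {c : ι → ℝ≥0∞} (hf_meas : ∀ j, Measurable (f j)) (hf_dep : ∀ j, DependsOn (f j) {j, σ j})
    (hf_int : ∀ j x, ∫⁻ y, f j (update x j y) ∂μ j ≤ c j) {T s : Finset ι} (hTs : T ⊆ s)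
    (hcyc : ∀ i ∈ T, σ i ≠ i → ∃ j ∉ T, σ.SameCycle i j) (x : ι → α) :
    (∫⋯∫⁻_s, (fun x => ∏ j ∈ T, f j x) ∂μ) x ≤ ∏ j ∈ T, c j := by
  induction T using Finset.strongInduction generalizing s x with | H T ih => ?_
  rcases T.eq_empty_or_nonempty with rfl | hT
  · simp [lmarginal]
  obtain ⟨i, hiT, hi⟩ := σ.exists_mem_eq_or_inv_notMem hT hcyc
  -- row `i` enters only the factor `f i`: the factor `f (σ⁻¹ i)` is absent or equal to `f i`
  have hsplit : ∀ x y,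
      ∏ j ∈ T, f j (update x i y) = (∏ j ∈ T.erase i, f j x) * f i (update x i y) := by
    intro x y
    rw [← prod_erase_mul T _ hiT]
    congr 1
    refine prod_congr rfl fun j hj => hf_dep j fun k hk => update_of_ne ?_ _ _
    rintro rfl
    rcases hk with rfl | hk
    · exact ne_of_mem_erase hj rfl
    · rcases hi with hi | hi
      · exact ne_of_mem_erase hj (σ.injective (hk.symm.trans hi.symm))
      · exact hi (by simpa [Set.mem_singleton_iff.mp hk] using mem_of_mem_erase hj)
  have hrest : ∀ j ∈ T.erase i, σ j ≠ j → ∃ k ∉ T.erase i, σ.SameCycle j k := fun j hj hσj =>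
    (hcyc j (mem_of_mem_erase hj) hσj).imp fun k hk => ⟨fun h => hk.1 (mem_of_mem_erase h), hk.2⟩
  calc (∫⋯∫⁻_s, (fun x => ∏ j ∈ T, f j x) ∂μ) x
      = (∫⋯∫⁻_(s.erase i), (fun x => ∫⁻ y, ∏ j ∈ T, f j (update x i y) ∂μ i) ∂μ) x := by
        rw [lmarginal_erase' _ (measurable_prod _ fun j _ => hf_meas j) (hTs hiT)]
    _ ≤ (∫⋯∫⁻_(s.erase i), (fun x => (∏ j ∈ T.erase i, f j x) * c i) ∂μ) x := by
        refine lmarginal_mono (fun x => ?_) x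
        simp_rw [hsplit]
        rw [lintegral_const_mul (f := fun y => f i (update x i y)) _
          ((hf_meas i).comp (measurable_update x))]
        exact mul_le_mul_right (hf_int i x) _
    _ = (∫⋯∫⁻_(s.erase i), (fun x => ∏ j ∈ T.erase i, f j x) ∂μ) x * c i :=
        lmarginal_mul_const _ (measurable_prod _ fun j _ => hf_meas j) _ x
    _ ≤ (∏ j ∈ T.erase i, c j) * c i :=
        mul_le_mul_left (ih _ (erase_ssubset hiT) (erase_subset_erase i hTs) hrest x) _
    _ = ∏ j ∈ T, c j := prod_erase_mul T c hiT

lemma lintegral_prod_le_of_dependsOn (σ : Equiv.Perm ι) {f : ι → (ι → α) → ℝ≥0∞}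
    {c : ι → ℝ≥0∞} (hf_meas : ∀ j, Measurable (f j)) (hf_dep : ∀ j, DependsOn (f j) {j, σ j})
    (hf_int : ∀ j x, ∫⁻ y, f j (update x j y) ∂μ j ≤ c j) {T : Finset ι}
    (hcyc : ∀ i ∈ T, σ i ≠ i → ∃ j ∉ T, σ.SameCycle i j) :
    ∫⁻ x, ∏ j ∈ T, f j x ∂Measure.pi μ ≤ ∏ j ∈ T, c j := by
  rcases isEmpty_or_nonempty (ι → α) with h | ⟨⟨x⟩⟩
  · simp
  rw [lintegral_eq_lmarginal_univ x]
  exact lmarginal_prod_le_of_dependsOn σ hf_meas hf_dep hf_int (subset_univ T) hcyc x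

end RowElimination

section GaussianIntegrals

open Real

lemma integral_exp_neg_mul_sq_mul_add_gaussianReal {a : ℝ} (ha : 0 ≤ a) (b c : ℝ) :
    ∫ x, exp (-(a * (b * x + c) ^ 2)) ∂gaussianReal 0 1
      = (√(1 + 2 * a * b ^ 2))⁻¹ * exp (-(a * c ^ 2 / (1 + 2 * a * b ^ 2))) := by
  set p := a * b ^ 2 + 1 / 2
  have hp : 0 < p := by positivity
  have h2p : 1 + 2 * a * b ^ 2 = 2 * p := by ring
  -- completing the square in the Gaussian density
  have hsquare : ∀ x : ℝ, gaussianPDFReal 0 1 x • exp (-(a * (b * x + c) ^ 2))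
      = (√(2 * π))⁻¹ * exp (-(a * c ^ 2 / (2 * p))) * exp (-p * (x + a * b * c / p) ^ 2) := by
    intro x
    rw [gaussianPDFReal, smul_eq_mul, mul_assoc, ← exp_add, mul_assoc _ (exp _), ← exp_add]
    congr 2
    · norm_num
    · field_simp
      simp only [p, NNReal.coe_one]
      ring
  have hnorm : (√(2 * π))⁻¹ * √(π / p) = (√(2 * p))⁻¹ := by
    rw [show 2 * π = 2 * p * (π / p) by field_simp, sqrt_mul (by positivity), mul_inv,
      mul_assoc, inv_mul_cancel₀ (by positivity), mul_one]
  rw [integral_gaussianReal_eq_integral_smul one_ne_zero, funext hsquare, integral_const_mul,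
    integral_add_right_eq_self (fun x => exp (-p * x ^ 2)), integral_gaussian, h2p,
    mul_right_comm, hnorm]

lemma map_dotProduct_pi_gaussianReal {ι : Type*} [Fintype ι] (w : ι → ℝ) :
    (Measure.pi fun _ : ι => gaussianReal 0 1).map (w ⬝ᵥ ·)
      = gaussianReal 0 (‖WithLp.toLp 2 w‖₊ ^ 2) := by
  have hL : (w ⬝ᵥ ·) = innerSL ℝ (WithLp.toLp 2 w) ∘ WithLp.toLp 2 := by
    ext y
    simp [dotProduct, PiLp.inner_apply, mul_comm]
  rw [hL, ← Measure.map_map (by fun_prop) (by fun_prop), map_pi_eq_stdGaussian,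
    IsGaussian.map_eq_gaussianReal, integral_strongDual_stdGaussian, variance_dual_stdGaussian,
    innerSL_apply_norm]
  congr
  ext
  simp

lemma integral_exp_neg_mul_sq_dotProduct_add {ι : Type*} [Fintype ι] {a : ℝ} (ha : 0 ≤ a)
    (w : ι → ℝ) (c : ℝ) :
    ∫ y, exp (-(a * (w ⬝ᵥ y + c) ^ 2)) ∂Measure.pi (fun _ : ι => gaussianReal 0 1)
      = (√(1 + 2 * a * (w ⬝ᵥ w)))⁻¹ * exp (-(a * c ^ 2 / (1 + 2 * a * (w ⬝ᵥ w)))) := by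
  have hw : ‖WithLp.toLp 2 w‖ ^ 2 = w ⬝ᵥ w := by
    simp [EuclideanSpace.real_norm_sq_eq, dotProduct, ← sq]
  have hstd : gaussianReal 0 (‖WithLp.toLp 2 w‖₊ ^ 2)
      = (gaussianReal 0 1).map (‖WithLp.toLp 2 w‖ * ·) := by
    rw [gaussianReal_map_const_mul]
    congr
    · simp
    · ext; simp
  rw [← integral_map (f := fun x => exp (-(a * (x + c) ^ 2))) (by fun_prop) (by fun_prop),
    map_dotProduct_pi_gaussianReal, hstd, integral_map (by fun_prop) (by fun_prop),
    integral_exp_neg_mul_sq_mul_add_gaussianReal ha, hw]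

lemma lintegral_exp_neg_mul_sq_dotProduct_add_le {ι : Type*} [Fintype ι] {a : ℝ} (ha : 0 ≤ a)
    (w : ι → ℝ) (c : ℝ) :
    ∫⁻ y, ENNReal.ofReal (exp (-(a * (w ⬝ᵥ y + c) ^ 2)))
        ∂Measure.pi (fun _ : ι => gaussianReal 0 1)
      ≤ ENNReal.ofReal ((√(1 + 2 * a * (w ⬝ᵥ w)))⁻¹) := by
  have hww : 0 ≤ w ⬝ᵥ w := Finset.sum_nonneg fun i _ => mul_self_nonneg (w i)
  rw [← ofReal_integral_eq_lintegral_ofReal, integral_exp_neg_mul_sq_dotProduct_add ha]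
  · refine ENNReal.ofReal_le_ofReal (mul_le_of_le_one_right (by positivity) ?_)
    exact exp_le_one_iff.mpr (neg_nonpos.mpr (by positivity))
  · refine Integrable.of_bound (by fun_prop) 1 (ae_of_all _ fun y => ?_)
    rw [norm_of_nonneg (exp_pos _).le]
    exact exp_le_one_iff.mpr (neg_nonpos.mpr (by positivity))
  · exact ae_of_all _ fun y => (exp_pos _).le

end GaussianIntegrals

section

open Real

lemma sq2_nonneg {m : ℕ} (v : Fin m → ℝ) : 0 ≤ sq2 v :=
  sum_nonneg fun i _ => sq_nonneg (v i)

lemma sq2_eq_dotProduct {m : ℕ} (v : Fin m → ℝ) : sq2 v = v ⬝ᵥ v := by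
  simp [sq2, dotProduct, sq]

section Cycles

variable {n : ℕ} (σ : Equiv.Perm (Fin n))

lemma nFixed_add_card_support : nFixed σ + #σ.support = n := by
  simpa [nFixed, Equiv.Perm.support] using card_filter_add_card_filter_not
    (s := (univ : Finset (Fin n))) fun i => σ i = i

lemma two_mul_totCycles_le : 2 * totCycles σ ≤ n + nFixed σ := by
  have := σ.two_mul_card_cycleType_le_card_support
  have := nFixed_add_card_support σ
  unfold totCycles
  omega

lemma totCycles_le : totCycles σ ≤ n := by
  have := two_mul_totCycles_le σ
  have := nFixed_add_card_support σ
  omega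

lemma prod_compl_ite_le {R : Finset (Fin n)} (hR : R ⊆ σ.support)
    (hRcard : #R ≤ Multiset.card σ.cycleType) {a b : ℝ} (ha : 0 ≤ a) (hb : 0 ≤ b) (hb1 : b ≤ 1) :
    ∏ j ∈ Rᶜ, (if σ j = j then a else b) ≤ a ^ nFixed σ * b ^ (n - totCycles σ) := by
  have hfixed : {j ∈ Rᶜ | σ j = j} = ({j | σ j = j} : Finset (Fin n)) := by
    ext j
    simp only [mem_filter, mem_compl, mem_univ, true_and, and_iff_right_iff_imp]
    exact fun hj hjR => Equiv.Perm.mem_support.mp (hR hjR) hj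
  have hmoved : {j ∈ Rᶜ | ¬σ j = j} = σ.support \ R := by
    ext j
    simp [and_comm]
  have hcount : n - totCycles σ ≤ #(σ.support \ R) := by
    have := nFixed_add_card_support σ
    rw [card_sdiff_of_subset hR]
    unfold totCycles
    omega
  rw [prod_ite, prod_const, prod_const, hfixed, hmoved]
  exact mul_le_mul_of_nonneg_left (pow_le_pow_of_le_one hb hb1 hcount) (by positivity)

end Cycles

lemma exp_neg_mul_sq2_sub_permMatrix_mulVec {n d : ℕ} (t : ℝ) (βstar β : Fin d → ℝ)
    (σ : Equiv.Perm (Fin n)) (X : Fin n → Fin d → ℝ) :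
    exp (-t * sq2 (Matrix.of X *ᵥ βstar - σ.permMatrix ℝ *ᵥ (Matrix.of X *ᵥ β)))
      = ∏ j, exp (-(t * (X j ⬝ᵥ βstar - X (σ j) ⬝ᵥ β) ^ 2)) := by
  rw [← exp_sum, sq2, mul_sum]
  refine congrArg exp (sum_congr rfl fun j _ => ?_)
  rw [Pi.sub_apply, permMatrix_mulVec, neg_mul]
  rfl

lemma lintegral_ofReal_exp_update_le {n d : ℕ} {t : ℝ} (ht : 0 ≤ t) (βstar β : Fin d → ℝ)
    (σ : Equiv.Perm (Fin n)) (j : Fin n) (X : Fin n → Fin d → ℝ) :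
    ∫⁻ y, ENNReal.ofReal (exp (-(t * (update X j y j ⬝ᵥ βstar - update X j y (σ j) ⬝ᵥ β) ^ 2)))
        ∂Measure.pi (fun _ => gaussianReal 0 1)
      ≤ ENNReal.ofReal (if σ j = j then (√(1 + 2 * t * sq2 (β - βstar)))⁻¹
          else (√(1 + 2 * t * sq2 βstar))⁻¹) := by
  by_cases hj : σ j = j
  · have hform : ∀ y : Fin d → ℝ, update X j y j ⬝ᵥ βstar - update X j y (σ j) ⬝ᵥ β
        = -((β - βstar) ⬝ᵥ y + 0) := by
      intro y
      simp [hj, dotProduct_comm y, sub_dotProduct]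
    simp only [hform, neg_sq, if_pos hj, sq2_eq_dotProduct]
    exact lintegral_exp_neg_mul_sq_dotProduct_add_le ht _ _
  · have hform : ∀ y : Fin d → ℝ, update X j y j ⬝ᵥ βstar - update X j y (σ j) ⬝ᵥ β
        = βstar ⬝ᵥ y + -(X (σ j) ⬝ᵥ β) := by
      intro y
      simp [update_of_ne hj, dotProduct_comm y, sub_eq_add_neg]
    simp only [hform, if_neg hj, sq2_eq_dotProduct]
    exact lintegral_exp_neg_mul_sq_dotProduct_add_le ht _ _

lemma integral_exp_neg_mul_sq2_sub_permMatrix_le {n d : ℕ} {t : ℝ} (ht : 0 ≤ t)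
    (βstar β : Fin d → ℝ) (σ : Equiv.Perm (Fin n)) :
    ∫ X, exp (-t * sq2 (Matrix.of X *ᵥ βstar - σ.permMatrix ℝ *ᵥ (Matrix.of X *ᵥ β)))
        ∂stdGaussianMatrix n d
      ≤ (√(1 + 2 * t * sq2 (β - βstar)))⁻¹ ^ nFixed σ
        * (√(1 + 2 * t * sq2 βstar))⁻¹ ^ (n - totCycles σ) := by
  set c : Fin n → ℝ := fun j => if σ j = j then (√(1 + 2 * t * sq2 (β - βstar)))⁻¹
    else (√(1 + 2 * t * sq2 βstar))⁻¹
  set f : Fin n → (Fin n → Fin d → ℝ) → ℝ≥0∞ :=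
    fun j X => ENNReal.ofReal (exp (-(t * (X j ⬝ᵥ βstar - X (σ j) ⬝ᵥ β) ^ 2)))
  have hc : ∀ j, 0 ≤ c j := fun j => by positivity
  have hf_meas : ∀ j, Measurable (f j) := fun j => by fun_prop
  have hf_dep : ∀ j, DependsOn (f j) {j, σ j} := fun j X Y h => by
    simp only [f, h j (by simp), h (σ j) (by simp)]
  obtain ⟨R, hRsupp, hRcard, hRcyc⟩ := σ.exists_subset_support_sameCycle
  have hcyc : ∀ i ∈ Rᶜ, σ i ≠ i → ∃ j ∉ Rᶜ, σ.SameCycle i j := fun i _ hi =>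
    (hRcyc i (Equiv.Perm.mem_support.mpr hi)).imp fun j hj => ⟨by simpa using hj.1, hj.2⟩
  have hlint : ∫⁻ X, ∏ j, f j X ∂stdGaussianMatrix n d ≤ ENNReal.ofReal (∏ j ∈ Rᶜ, c j) :=
    calc ∫⁻ X, ∏ j, f j X ∂stdGaussianMatrix n d
        ≤ ∫⁻ X, ∏ j ∈ Rᶜ, f j X ∂stdGaussianMatrix n d :=
          lintegral_mono fun X => prod_le_prod_of_subset_of_le_one' (subset_univ _)
            fun j _ _ => ENNReal.ofReal_le_one.mpr (exp_le_one_iff.mpr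
              (neg_nonpos.mpr (by positivity)))
      _ ≤ ∏ j ∈ Rᶜ, ENNReal.ofReal (c j) :=
          lintegral_prod_le_of_dependsOn σ hf_meas hf_dep
            (lintegral_ofReal_exp_update_le ht βstar β σ) hcyc
      _ = ENNReal.ofReal (∏ j ∈ Rᶜ, c j) := (ENNReal.ofReal_prod_of_nonneg fun j _ => hc j).symm
  calc ∫ X, exp (-t * sq2 (Matrix.of X *ᵥ βstar - σ.permMatrix ℝ *ᵥ (Matrix.of X *ᵥ β)))
        ∂stdGaussianMatrix n d
      = (∫⁻ X, ∏ j, f j X ∂stdGaussianMatrix n d).toReal := by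
        simp_rw [exp_neg_mul_sq2_sub_permMatrix_mulVec, f, ← ENNReal.ofReal_prod_of_nonneg
          fun j _ => (exp_pos _).le]
        exact integral_eq_lintegral_of_nonneg_ae (ae_of_all _ fun X => by positivity)
          (by fun_prop)
    _ ≤ ∏ j ∈ Rᶜ, c j := ENNReal.toReal_le_of_le_ofReal (prod_nonneg fun j _ => hc j) hlint
    _ ≤ _ := prod_compl_ite_le σ hRsupp hRcard (by positivity) (by positivity)
        (inv_le_one_of_one_le₀ (one_le_sqrt.mpr (by nlinarith [sq2_nonneg βstar])))

lemma inv_sqrt_pow_eq_rpow {x : ℝ} (hx : 0 ≤ x) (k : ℕ) : (√x)⁻¹ ^ k = x ^ (-(k : ℝ) / 2) := by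
  rw [sqrt_eq_rpow, ← rpow_natCast, ← rpow_neg_one, ← rpow_mul hx, ← rpow_mul hx]
  ring_nf

end

/-- there are absolute constants `c₀, C₀ > 0` such that if `√t‖β*‖₂ ≥ C₀`, then
`E[exp(−t‖Xβ* − ΠXβ‖₂²)] ≤ (1 + 2t‖β − β*‖²)^{−n₁(Π)/2} (c₀√t‖β*‖)^{−(n−fc(Π))}`
`≤ (1 + 2t‖β − β*‖²)^{−n₁(Π)/2} (c₀√t‖β*‖)^{−(n−n₁(Π))/2}`. -/
theorem stmt10 :
    ∃ c₀ : ℝ, 0 < c₀ ∧ ∃ C₀ : ℝ, 0 < C₀ ∧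
      ∀ (n d : ℕ), 0 < n → 0 < d → ∀ (βstar β : Fin d → ℝ) (t : ℝ), 0 < t →
        C₀ ≤ Real.sqrt t * enorm2 βstar →
        ∀ π : Equiv.Perm (Fin n),
          (∫ X, Real.exp
              (-t * sq2 (Matrix.of X *ᵥ βstar - π.permMatrix ℝ *ᵥ (Matrix.of X *ᵥ β)))
              ∂(stdGaussianMatrix n d))
            ≤ (1 + 2 * t * sq2 (β - βstar)) ^ (-(nFixed π : ℝ) / 2)
              * (c₀ * Real.sqrt t * enorm2 βstar) ^ (-((n : ℝ) - totCycles π)) ∧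
          (1 + 2 * t * sq2 (β - βstar)) ^ (-(nFixed π : ℝ) / 2)
              * (c₀ * Real.sqrt t * enorm2 βstar) ^ (-((n : ℝ) - totCycles π))
            ≤ (1 + 2 * t * sq2 (β - βstar)) ^ (-(nFixed π : ℝ) / 2)
              * (c₀ * Real.sqrt t * enorm2 βstar) ^ (-((n : ℝ) - nFixed π) / 2) := by
  refine ⟨1, one_pos, 1, one_pos, fun n d _ _ βstar β t ht hC σ => ?_⟩
  rw [one_mul]
  set s := Real.sqrt t * enorm2 βstar with hs_def
  have hs : 0 < s := one_pos.trans_le hC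
  have hcc : (Real.sqrt (1 + 2 * t * sq2 βstar))⁻¹ ≤ s⁻¹ := by
    refine inv_anti₀ hs ?_
    rw [hs_def, enorm2, ← Real.sqrt_mul ht.le]
    exact Real.sqrt_le_sqrt (by nlinarith [sq2_nonneg βstar])
  have hpow : s⁻¹ ^ (n - totCycles σ) = s ^ (-((n : ℝ) - totCycles σ)) := by
    rw [Real.rpow_neg hs.le, ← Nat.cast_sub (totCycles_le σ), Real.rpow_natCast, inv_pow]
  have hbase : 0 ≤ 1 + 2 * t * sq2 (β - βstar) := by nlinarith [sq2_nonneg (β - βstar)]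
  refine ⟨?_, ?_⟩
  · calc _ ≤ _ := integral_exp_neg_mul_sq2_sub_permMatrix_le ht.le βstar β σ
      _ ≤ (Real.sqrt (1 + 2 * t * sq2 (β - βstar)))⁻¹ ^ nFixed σ * s⁻¹ ^ (n - totCycles σ) := by
        gcongr
      _ = _ := by rw [inv_sqrt_pow_eq_rpow hbase, hpow]
  · have hcount : (2 * totCycles σ : ℝ) ≤ n + nFixed σ := by
      exact_mod_cast two_mul_totCycles_le σ
    gcongr
    linarith
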